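/- arXiv:1506.02620 — 2 statements merged into one kernel-verified Lean document; each statement's English description precedes it below -/
import Mathlib

section
/- Let H be a symmetric positive definite n×n matrix, α ∈ F, and let d* be the minimizer of the subproblem at α. Then ∇f(α)ᵀd* ≤ −(d*)ᵀH d*. In particular, if d* ≠ 0 then ∇f(α)ᵀd* < 0, i.e., d* is a strict descent direction for f at α. -/
/-!
Shrinking the minimizer towards the feasible point `0` stays feasible, so `s ↦ g (s • d*)`,
a quadratic `s G + s² Q / 2` with `G = ∇f(α)ᵀd*` and `Q = d*ᵀ H d*`, is minimized over `[0, 1]`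
at `s = 1`. Fermat's rule at this right endpoint says its derivative `G + Q` there is `≤ 0`;
positive definiteness makes `Q > 0` whenever `d* ≠ 0`.
-/

open Matrix Set

theorem add_nonpos_of_isMinOn_Icc_one {a b : ℝ}
    (h : IsMinOn (fun s : ℝ => s * a + s ^ 2 / 2 * b) (Icc 0 1) 1) : a + b ≤ 0 := by
  have hderiv : HasDerivAt (fun s : ℝ => s * a + s ^ 2 / 2 * b) (a + b) 1 :=
    (((hasDerivAt_id 1).mul_const a).add
      (((hasDerivAt_pow 2 1).div_const 2).mul_const b)).congr_deriv (by norm_num)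
  have hcone : (0 : ℝ) - 1 ∈ posTangentConeAt (Icc 0 1) 1 :=
    sub_mem_posTangentConeAt_of_segment_subset <|
      (convex_Icc 0 1).segment_subset (right_mem_Icc.2 zero_le_one) (left_mem_Icc.2 zero_le_one)
  have := h.localize.hasFDerivWithinAt_nonneg hderiv.hasFDerivAt.hasFDerivWithinAt hcone
  rw [ContinuousLinearMap.toSpanSingleton_apply, smul_eq_mul] at this
  linarith

theorem dotProduct_smul_mulVec_smul {ι : Type*} [Fintype ι] (H : Matrix ι ι ℝ) (s : ℝ)
    (d : ι → ℝ) : (s • d) ⬝ᵥ H *ᵥ (s • d) = s ^ 2 * (d ⬝ᵥ H *ᵥ d) := by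
  rw [mulVec_smul, smul_dotProduct, dotProduct_smul, smul_eq_mul, smul_eq_mul]
  ring

theorem dotProduct_le_neg_of_isMinOn_quadratic {ι : Type*} [Fintype ι] (b : ι → ℝ)
    (H : Matrix ι ι ℝ) {S : Set (ι → ℝ)} (hS : Convex ℝ S) (hS0 : 0 ∈ S) {d : ι → ℝ} (hdS : d ∈ S)
    (hd : IsMinOn (fun c => b ⬝ᵥ c + 1 / 2 * (c ⬝ᵥ H *ᵥ c)) S d) :
    b ⬝ᵥ d ≤ -(d ⬝ᵥ H *ᵥ d) := by
  have hray : IsMinOn (fun s : ℝ => s * (b ⬝ᵥ d) + s ^ 2 / 2 * (d ⬝ᵥ H *ᵥ d)) (Icc 0 1) 1 := by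
    intro s hs
    have := hd (hS.smul_mem_of_zero_mem hS0 hdS hs)
    simp only [mem_ofPred_eq, dotProduct_smul_mulVec_smul, dotProduct_smul, smul_eq_mul] at this
    simp only [mem_ofPred_eq]
    linarith
  linarith [add_nonpos_of_isMinOn_Icc_one hray]

theorem bqo_subproblem_minimizer_descent_general
    {n : ℕ}
    (M : Matrix (Fin n) (Fin n) ℝ) (v : Fin n → ℝ)
    (H : Matrix (Fin n) (Fin n) ℝ) (hH : H.PosDef)
    (α : Fin n → ℝ) (hα : ∀ i, 0 ≤ α i)
    (g : (Fin n → ℝ) → ℝ)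
    (hg : ∀ d, g d = (M.mulVec α - v) ⬝ᵥ d + (1 / 2) * (d ⬝ᵥ H.mulVec d))
    (dstar : Fin n → ℝ) (hfeas : ∀ i, 0 ≤ α i + dstar i)
    (hmin : ∀ c : Fin n → ℝ, (∀ i, 0 ≤ α i + c i) → g dstar ≤ g c) :
    (M.mulVec α - v) ⬝ᵥ dstar ≤ -(dstar ⬝ᵥ H.mulVec dstar) ∧
      (dstar ≠ 0 → (M.mulVec α - v) ⬝ᵥ dstar < 0) := by
  have hfeasible_eq : {c : Fin n → ℝ | ∀ i, 0 ≤ α i + c i} = Ici (-α) := by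
    ext c
    simp [Pi.le_def, neg_le_iff_add_nonneg, add_comm]
  have hdescent : (M.mulVec α - v) ⬝ᵥ dstar ≤ -(dstar ⬝ᵥ H.mulVec dstar) := by
    refine dotProduct_le_neg_of_isMinOn_quadratic _ H (S := {c | ∀ i, 0 ≤ α i + c i})
      (hfeasible_eq ▸ convex_Ici _) (by simpa using hα) hfeas fun c hc => ?_
    simpa only [mem_ofPred_eq, ← hg] using hmin c hc
  refine ⟨hdescent, fun hd => ?_⟩
  have hQ : 0 < dstar ⬝ᵥ H *ᵥ dstar := by simpa using hH.dotProduct_mulVec_pos hd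
  linarith

/-- The subproblem minimizer is a (strict, when nonzero) descent direction:
∇f(α)ᵀd* ≤ −(d*)ᵀH d*, and ∇f(α)ᵀd* < 0 whenever d* ≠ 0. -/
theorem bqo_subproblem_minimizer_descent
    {n : ℕ} (hn : 0 < n)
    (M : Matrix (Fin n) (Fin n) ℝ) (hM : M.PosSemidef) (v : Fin n → ℝ)
    (H : Matrix (Fin n) (Fin n) ℝ) (hH : H.PosDef)
    (α : Fin n → ℝ) (hα : ∀ i, 0 ≤ α i)
    (g : (Fin n → ℝ) → ℝ)
    (hg : ∀ d, g d = (M.mulVec α - v) ⬝ᵥ d + (1 / 2) * (d ⬝ᵥ H.mulVec d))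
    (dstar : Fin n → ℝ) (hfeas : ∀ i, 0 ≤ α i + dstar i)
    (hmin : ∀ c : Fin n → ℝ, (∀ i, 0 ≤ α i + c i) → g dstar ≤ g c) :
    (M.mulVec α - v) ⬝ᵥ dstar ≤ -(dstar ⬝ᵥ H.mulVec dstar) ∧
      (dstar ≠ 0 → (M.mulVec α - v) ⬝ᵥ dstar < 0) :=
  bqo_subproblem_minimizer_descent_general M v H hH α hα g hg dstar hfeas hmin
end

section
/- Suppose α* minimizes the dual objective f(α) = (1/2)αᵀ(Q + A/(2C))α − vᵀα over {α ∈ ℝᵐ : α ≥ 0 componentwise}. Define w* = Σ_{j=1}^m α*_j φ_j and ξ*_i = (1/(2C)) Σ_{j : σ(j) = i} α*_j for i = 1,…,l. Then (w*, ξ*) is feasible for the primal problem, (w*, ξ*) is optimal for the primal problem, and the primal optimal value equals the negated dual optimal value: (1/2)‖w*‖² + C Σ_{i=1}^l (ξ*_i)² = −f(α*). -/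
/-!
The dual objective is the quadratic `½ αᵀMα - vᵀα` with `M = Q + A / (2C)` symmetric, so the
first-order conditions at a minimiser over the orthant, taken along the feasible directions `eⱼ`
and `±α`, are the KKT conditions `Mα ≥ v` and `αᵀMα = vᵀα`. The vector `Mα` is the margin
`(w*ᵀφⱼ + ξ*_{σ(j)})ⱼ`, so the first condition is primal feasibility, and
`αᵀMα = ‖w*‖² + 2C‖ξ*‖²`. Weighting the constraints of a feasible `(w, ξ)` by `α ≥ 0` gives
`vᵀα ≤ wᵀw* + 2C ξᵀξ*`, and `2xᵀy ≤ ‖x‖² + ‖y‖²` turns this into optimality of `(w*, ξ*)`;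
the value identity is the second KKT condition.
-/

open Matrix

open Filter Topology in
theorem nonneg_of_forall_mem_Ioc_nonneg_mul_add_sq_mul {p q : ℝ}
    (h : ∀ t ∈ Set.Ioc (0 : ℝ) 1, 0 ≤ t * p + t ^ 2 * q) : 0 ≤ p := by
  have hlim : Tendsto (fun t : ℝ => p + t * q) (𝓝[>] 0) (𝓝 p) := by
    refine (Continuous.tendsto' (by fun_prop) 0 p (by simp)).mono_left nhdsWithin_le_nhds
  refine ge_of_tendsto hlim ?_
  filter_upwards [Ioc_mem_nhdsGT zero_lt_one] with t ht
  refine nonneg_of_mul_nonneg_right ?_ ht.1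
  linear_combination h t ht

theorem two_mul_dotProduct_le {n R : Type*} [Fintype n] [CommRing R] [LinearOrder R]
    [IsStrictOrderedRing R] (x y : n → R) : 2 * (x ⬝ᵥ y) ≤ x ⬝ᵥ x + y ⬝ᵥ y := by
  have h : 0 ≤ (x - y) ⬝ᵥ (x - y) := Fintype.sum_nonneg fun i => mul_self_nonneg _
  simp only [sub_dotProduct, dotProduct_sub, dotProduct_comm y x] at h
  linarith

section QuadraticProgram

variable {n : Type*} [Fintype n]

noncomputable def quadObjective (M : Matrix n n ℝ) (v : n → ℝ) (a : n → ℝ) : ℝ :=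
  1 / 2 * (a ⬝ᵥ M *ᵥ a) - v ⬝ᵥ a

variable {M : Matrix n n ℝ} {v a : n → ℝ}

theorem quadObjective_add_smul (hM : M.IsSymm) (d : n → ℝ) (t : ℝ) :
    quadObjective M v (a + t • d) =
      quadObjective M v a + t * ((M *ᵥ a - v) ⬝ᵥ d) + t ^ 2 * (1 / 2 * (d ⬝ᵥ M *ᵥ d)) := by
  have hsymm : d ⬝ᵥ M *ᵥ a = a ⬝ᵥ M *ᵥ d := by
    rw [dotProduct_mulVec, ← mulVec_transpose, hM.eq, dotProduct_comm]
  simp only [quadObjective, mulVec_add, mulVec_smul, dotProduct_add, add_dotProduct,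
    dotProduct_smul, smul_dotProduct, sub_dotProduct, smul_eq_mul, hsymm,
    dotProduct_comm (M *ᵥ a) d]
  ring

theorem IsMinOn.quadObjective_directional_nonneg {s : Set (n → ℝ)} (hM : M.IsSymm)
    (hmin : IsMinOn (quadObjective M v) s a) {d : n → ℝ}
    (hd : ∀ t ∈ Set.Ioc (0 : ℝ) 1, a + t • d ∈ s) : 0 ≤ (M *ᵥ a - v) ⬝ᵥ d := by
  refine nonneg_of_forall_mem_Ioc_nonneg_mul_add_sq_mul (q := 1 / 2 * (d ⬝ᵥ M *ᵥ d))
    fun t ht => ?_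
  have : quadObjective M v a ≤ quadObjective M v (a + t • d) := hmin (hd t ht)
  rw [quadObjective_add_smul hM] at this
  linarith

theorem IsMinOn.dotProduct_mulVec_self_of_quadObjective (hM : M.IsSymm)
    (hmin : IsMinOn (quadObjective M v) (Set.Ici 0) a) (ha : 0 ≤ a) :
    a ⬝ᵥ M *ᵥ a = v ⬝ᵥ a := by
  have hup := hmin.quadObjective_directional_nonneg hM (d := a) fun t ht =>
    add_nonneg ha (smul_nonneg ht.1.le ha)
  have hdown := hmin.quadObjective_directional_nonneg hM (d := -a) fun t ht => by
    rw [show a + t • -a = (1 - t) • a by module]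
    exact smul_nonneg (sub_nonneg.2 ht.2) ha
  rw [dotProduct_neg] at hdown
  rw [sub_dotProduct, dotProduct_comm] at hup hdown
  linarith

variable [DecidableEq n]

theorem IsMinOn.le_mulVec_of_quadObjective (hM : M.IsSymm)
    (hmin : IsMinOn (quadObjective M v) (Set.Ici 0) a) (ha : 0 ≤ a) : v ≤ M *ᵥ a := by
  intro j
  have hj := hmin.quadObjective_directional_nonneg hM (d := Pi.single j 1) fun t ht =>
    add_nonneg ha (smul_nonneg ht.1.le (Pi.single_nonneg.2 zero_le_one))
  simpa using hj

end QuadraticProgram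

section StructuredSVM

variable {ι κ n : Type*} [Fintype n] (φ : ι → n → ℝ) (σ : ι → κ)

def margin (w : n → ℝ) (ξ : κ → ℝ) (j : ι) : ℝ := w ⬝ᵥ φ j + ξ (σ j)

variable [DecidableEq κ]

theorem isSymm_add_smul_of_gram {Q A : Matrix ι ι ℝ} (hQ : ∀ j k, Q j k = φ j ⬝ᵥ φ k)
    (hA : ∀ j k, A j k = if σ j = σ k then (1 : ℝ) else 0) (c : ℝ) : (Q + c • A).IsSymm :=
  (IsSymm.ext fun j k => by rw [hQ, hQ, dotProduct_comm]).add
    ((IsSymm.ext fun j k => by rw [hA, hA]; exact if_congr eq_comm rfl rfl).smul c)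

variable [Fintype ι]

theorem sum_mul_comp_eq_sum_fiber_mul [Fintype κ] (x : ι → ℝ) (F : κ → ℝ) :
    ∑ j, x j * F (σ j) = ∑ i, (∑ j ∈ Finset.univ.filter (fun j => σ j = i), x j) * F i := by
  rw [← Finset.sum_fiberwise Finset.univ σ]
  refine Finset.sum_congr rfl fun i _ => ?_
  rw [Finset.sum_mul]
  refine Finset.sum_congr rfl fun j hj => ?_
  rw [(Finset.mem_filter.1 hj).2]

theorem dotProduct_margin [Fintype κ] (α : ι → ℝ) (w : n → ℝ) (ξ : κ → ℝ) :
    α ⬝ᵥ margin φ σ w ξ = w ⬝ᵥ (∑ j, α j • φ j) +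
      ∑ i, (∑ j ∈ Finset.univ.filter (fun j => σ j = i), α j) * ξ i := by
  simp only [dotProduct_sum, dotProduct_smul, smul_eq_mul, ← sum_mul_comp_eq_sum_fiber_mul,
    ← Finset.sum_add_distrib, ← mul_add]
  rfl

theorem mulVec_eq_margin {Q A : Matrix ι ι ℝ} (hQ : ∀ j k, Q j k = φ j ⬝ᵥ φ k)
    (hA : ∀ j k, A j k = if σ j = σ k then (1 : ℝ) else 0) (c : ℝ) (α : ι → ℝ) :
    (Q + c • A) *ᵥ α = margin φ σ (∑ j, α j • φ j)
      (fun i => c * ∑ j ∈ Finset.univ.filter (fun j => σ j = i), α j) := by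
  ext j
  have hQα : (Q *ᵥ α) j = (∑ k, α k • φ k) ⬝ᵥ φ j := by
    simp only [mulVec, dotProduct_comm (φ j), hQ, sum_dotProduct, smul_dotProduct, smul_eq_mul]
    exact dotProduct_comm _ _
  have hAα : (A *ᵥ α) j = ∑ k ∈ Finset.univ.filter (fun k => σ k = σ j), α k := by
    simp only [mulVec, dotProduct, hA, Finset.sum_filter, ite_mul, one_mul, zero_mul, eq_comm]
  rw [add_mulVec, smul_mulVec, Pi.add_apply, Pi.smul_apply, smul_eq_mul, hQα, hAα, margin]

end StructuredSVM

theorem ssvm_dual_optimal_gives_primal_optimal_general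
    {d l m : ℕ}
    (φ : Fin m → Fin d → ℝ) (v : Fin m → ℝ) (σ : Fin m → Fin l)
    (C : ℝ) (hC : 0 < C)
    (Q A : Matrix (Fin m) (Fin m) ℝ)
    (hQ : ∀ j k, Q j k = φ j ⬝ᵥ φ k)
    (hA : ∀ j k, A j k = if σ j = σ k then (1 : ℝ) else 0)
    (f : (Fin m → ℝ) → ℝ)
    (hf : ∀ a, f a = (1 / 2) * (a ⬝ᵥ (Q + (1 / (2 * C)) • A).mulVec a) - v ⬝ᵥ a)
    (αstar : Fin m → ℝ) (hαnn : ∀ j, 0 ≤ αstar j)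
    (hαopt : ∀ β : Fin m → ℝ, (∀ j, 0 ≤ β j) → f αstar ≤ f β)
    (wstar : Fin d → ℝ) (hw : wstar = ∑ j, αstar j • φ j)
    (ξstar : Fin l → ℝ)
    (hξ : ∀ i, ξstar i =
      (1 / (2 * C)) * ∑ j ∈ Finset.univ.filter (fun j => σ j = i), αstar j) :
    (∀ j, wstar ⬝ᵥ φ j ≥ v j - ξstar (σ j)) ∧
    (∀ (w : Fin d → ℝ) (ξ : Fin l → ℝ), (∀ j, w ⬝ᵥ φ j ≥ v j - ξ (σ j)) →
      (1 / 2) * (wstar ⬝ᵥ wstar) + C * ∑ i, (ξstar i) ^ 2 ≤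
        (1 / 2) * (w ⬝ᵥ w) + C * ∑ i, (ξ i) ^ 2) ∧
    (1 / 2) * (wstar ⬝ᵥ wstar) + C * ∑ i, (ξstar i) ^ 2 = -f αstar := by
  set M := Q + (1 / (2 * C)) • A
  have hM : M.IsSymm := isSymm_add_smul_of_gram φ σ hQ hA _
  have hmin : IsMinOn (quadObjective M v) (Set.Ici 0) αstar := by
    rw [← show f = quadObjective M v from funext hf]
    exact fun β hβ => hαopt β hβ
  have hMα : M *ᵥ αstar = margin φ σ wstar ξstar := by
    rw [mulVec_eq_margin φ σ hQ hA, ← hw, ← funext hξ]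
  have hpair : ∀ w ξ, αstar ⬝ᵥ margin φ σ w ξ = w ⬝ᵥ wstar + 2 * C * (ξ ⬝ᵥ ξstar) := by
    have hfiber : ∀ i, ∑ j ∈ Finset.univ.filter (fun j => σ j = i), αstar j = 2 * C * ξstar i :=
      fun i => by rw [hξ]; field_simp
    intro w ξ
    rw [dotProduct_margin, ← hw]
    congr 1
    simp only [hfiber, dotProduct, Finset.mul_sum]
    exact Finset.sum_congr rfl fun i _ => by ring
  have hfeas : v ≤ margin φ σ wstar ξstar := hMα ▸ hmin.le_mulVec_of_quadObjective hM hαnn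
  have hslack : wstar ⬝ᵥ wstar + 2 * C * (ξstar ⬝ᵥ ξstar) = v ⬝ᵥ αstar := by
    rw [← hpair, ← hMα, hmin.dotProduct_mulVec_self_of_quadObjective hM hαnn]
  have hsq : ∀ ξ : Fin l → ℝ, ∑ i, ξ i ^ 2 = ξ ⬝ᵥ ξ := fun ξ => by simp only [dotProduct, sq]
  simp only [hsq, ge_iff_le, sub_le_iff_le_add]
  refine ⟨hfeas, fun w ξ hwξ => ?_, ?_⟩
  · have hdual : v ⬝ᵥ αstar ≤ w ⬝ᵥ wstar + 2 * C * (ξ ⬝ᵥ ξstar) := by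
      rw [← hpair, dotProduct_comm αstar]
      exact dotProduct_le_dotProduct_of_nonneg_right hwξ hαnn
    have hw2 := two_mul_dotProduct_le w wstar
    have hξ2 := mul_le_mul_of_nonneg_left (two_mul_dotProduct_le ξ ξstar) hC.le
    linarith
  · rw [hf, hmin.dotProduct_mulVec_self_of_quadObjective hM hαnn]
    linarith

/-- Strong duality / primal recovery for the L2-loss structured SVM: from a
dual optimal α*, the pair (w*, ξ*) is primal feasible and primal optimal, and
the primal optimal value equals the negated dual optimal value. -/
theorem ssvm_dual_optimal_gives_primal_optimal
    {d l m : ℕ} (hd : 0 < d) (hl : 0 < l) (hm : 0 < m)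
    (φ : Fin m → Fin d → ℝ) (v : Fin m → ℝ) (σ : Fin m → Fin l)
    (C : ℝ) (hC : 0 < C)
    (Q A : Matrix (Fin m) (Fin m) ℝ)
    (hQ : ∀ j k, Q j k = φ j ⬝ᵥ φ k)
    (hA : ∀ j k, A j k = if σ j = σ k then (1 : ℝ) else 0)
    (f : (Fin m → ℝ) → ℝ)
    (hf : ∀ a, f a = (1 / 2) * (a ⬝ᵥ (Q + (1 / (2 * C)) • A).mulVec a) - v ⬝ᵥ a)
    (αstar : Fin m → ℝ) (hαnn : ∀ j, 0 ≤ αstar j)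
    (hαopt : ∀ β : Fin m → ℝ, (∀ j, 0 ≤ β j) → f αstar ≤ f β)
    (wstar : Fin d → ℝ) (hw : wstar = ∑ j, αstar j • φ j)
    (ξstar : Fin l → ℝ)
    (hξ : ∀ i, ξstar i =
      (1 / (2 * C)) * ∑ j ∈ Finset.univ.filter (fun j => σ j = i), αstar j) :
    (∀ j, wstar ⬝ᵥ φ j ≥ v j - ξstar (σ j)) ∧
    (∀ (w : Fin d → ℝ) (ξ : Fin l → ℝ), (∀ j, w ⬝ᵥ φ j ≥ v j - ξ (σ j)) →
      (1 / 2) * (wstar ⬝ᵥ wstar) + C * ∑ i, (ξstar i) ^ 2 ≤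
        (1 / 2) * (w ⬝ᵥ w) + C * ∑ i, (ξ i) ^ 2) ∧
    (1 / 2) * (wstar ⬝ᵥ wstar) + C * ∑ i, (ξstar i) ^ 2 = -f αstar :=
  ssvm_dual_optimal_gives_primal_optimal_general φ v σ C hC Q A hQ hA f hf αstar hαnn hαopt wstar hw
    ξstar hξ
end
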